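/- arXiv:2304.04032 — 4 statements merged into one kernel-verified Lean document; each statement's English description precedes it below -/
import Mathlib

section
/- With the setup above, for ω ∈ T_x M, λ ∈ ℝ^d, and any matrix Λ_x satisfying Λ_x B_x = 0 and Λ_x = Λ_x P_x, one has Λ_x (DB_x[ω]) λ = −Λ_x W_x(ω, B_x λ), where W_x is the Weingarten map W_x(ω,u) = P_x(D(x ↦ P_x)(x)[ω]·u). -/
/-! Differentiating `P = 1 - B Bᵀ` gives `DP[ω] = -(B DB[ω]ᵀ + DB[ω] Bᵀ)`. Since `Λ B = 0`, `Λ`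
absorbs `P` and annihilates the first term, while `Bᵀ B = 1` turns the second, applied to `B λ`,
into `DB[ω] λ`. -/

open Matrix

attribute [local instance] Matrix.normedAddCommGroup Matrix.normedSpace

section Algebra

variable {R : Type*} [Ring R] {l m k : Type*} [Fintype m] [Fintype k] [DecidableEq m]
  {Λ : Matrix l m R} {B : Matrix m k R}

theorem mul_one_sub_mul_transpose_of_mul_eq_zero (hΛB : Λ * B = 0) :
    Λ * (1 - B * Bᵀ) = Λ := by
  rw [Matrix.mul_sub, Matrix.mul_one, ← Matrix.mul_assoc, hΛB, Matrix.zero_mul, sub_zero]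

theorem mul_one_sub_mul_transpose_mul_add_mul_transpose_mul [DecidableEq k] (hΛB : Λ * B = 0)
    (hB : Bᵀ * B = 1) (D : Matrix m k R) :
    Λ * (1 - B * Bᵀ) * (B * Dᵀ + D * Bᵀ) * B = Λ * D := by
  rw [mul_one_sub_mul_transpose_of_mul_eq_zero hΛB, Matrix.mul_add, ← Matrix.mul_assoc, hΛB,
    Matrix.zero_mul, zero_add, Matrix.mul_assoc, Matrix.mul_assoc, hB, Matrix.mul_one]

end Algebra

section Derivative

variable {E : Type*} [NormedAddCommGroup E] [NormedSpace ℝ E] {m k : Type*} [Fintype m]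
  [Fintype k]

theorem fderiv_one_sub_mul_transpose_apply [DecidableEq m] {B : E → Matrix m k ℝ}
    {B' : E →L[ℝ] Matrix m k ℝ} {x : E} (hB : HasFDerivAt B B' x) (ω : E) :
    fderiv ℝ (fun y => 1 - B y * (B y)ᵀ) x ω = -(B x * (B' ω)ᵀ + B' ω * (B x)ᵀ) := by
  let transposeCLM : Matrix m k ℝ →L[ℝ] Matrix k m ℝ :=
    LinearMap.toContinuousLinearMap (transposeLinearEquiv m k ℝ ℝ).toLinearMap
  let mulCLM : Matrix m k ℝ →L[ℝ] Matrix k m ℝ →L[ℝ] Matrix m m ℝ :=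
    (mulLinearMap ℝ).toContinuousBilinearMap
  have hBt : HasFDerivAt (fun y => (B y)ᵀ) (transposeCLM.comp B') x :=
    transposeCLM.hasFDerivAt.comp x hB
  have hprod : HasFDerivAt (fun y => B y * (B y)ᵀ) _ x :=
    mulCLM.hasFDerivAt_of_bilinear hB hBt
  have hproj : HasFDerivAt (fun y => 1 - B y * (B y)ᵀ) _ x := hprod.const_sub 1
  rw [hproj.fderiv]
  rfl

end Derivative

theorem lambda_weingarten_general (n d : ℕ) (x : Fin n → ℝ)
    (B : (Fin n → ℝ) → Matrix (Fin n) (Fin d) ℝ)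
    (B' : (Fin n → ℝ) →L[ℝ] Matrix (Fin n) (Fin d) ℝ)
    (hB : HasFDerivAt B B' x)
    (horth : (B x)ᵀ * B x = 1)
    (P : (Fin n → ℝ) → Matrix (Fin n) (Fin n) ℝ)
    (hP : P = fun y => 1 - B y * (B y)ᵀ)
    (Lam : Matrix (Fin n) (Fin n) ℝ)
    (hLB : Lam * B x = 0)
    (ω : Fin n → ℝ)
    (lam : Fin d → ℝ) :
    Lam *ᵥ ((B' ω) *ᵥ lam) =
      -(Lam *ᵥ (P x *ᵥ ((fderiv ℝ P x ω) *ᵥ (B x *ᵥ lam)))) := by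
  have hDP : fderiv ℝ P x ω = -(B x * (B' ω)ᵀ + B' ω * (B x)ᵀ) := by
    rw [hP, fderiv_one_sub_mul_transpose_apply hB]
  have hPx : P x = 1 - B x * (B x)ᵀ := by rw [hP]
  rw [hDP, hPx, mulVec_mulVec, mulVec_mulVec, mulVec_mulVec, mulVec_mulVec, Matrix.mul_neg,
    Matrix.neg_mul, neg_mulVec, neg_neg,
    mul_one_sub_mul_transpose_mul_add_mul_transpose_mul hLB horth]

/-- For any matrix `Λ` with `Λ B_x = 0` and `Λ = Λ P_x`, one has
`Λ (DB_x[ω]) λ = −Λ W_x(ω, B_x λ)`, where `W_x(ω,u) = P_x(DP[ω]·u)` is the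
Weingarten map and `P_y = I − B_y B_yᵀ`. -/
theorem lambda_weingarten (n d : ℕ) (x : Fin n → ℝ)
    (B : (Fin n → ℝ) → Matrix (Fin n) (Fin d) ℝ)
    (B' : (Fin n → ℝ) →L[ℝ] Matrix (Fin n) (Fin d) ℝ)
    (hB : HasFDerivAt B B' x)
    (horth : (B x)ᵀ * B x = 1)
    (P : (Fin n → ℝ) → Matrix (Fin n) (Fin n) ℝ)
    (hP : P = fun y => 1 - B y * (B y)ᵀ)
    (Lam : Matrix (Fin n) (Fin n) ℝ)
    (hLB : Lam * B x = 0) (hLP : Lam = Lam * P x)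
    (ω : Fin n → ℝ) (hω : (B x)ᵀ *ᵥ ω = 0)
    (lam : Fin d → ℝ) :
    Lam *ᵥ ((B' ω) *ᵥ lam) =
      -(Lam *ᵥ (P x *ᵥ ((fderiv ℝ P x ω) *ᵥ (B x *ᵥ lam)))) :=
  lambda_weingarten_general n d x B B' hB horth P hP Lam hLB ω lam
end

section
/- Let B̄ ∈ ℝ^{j×d} have full column rank with j ≥ d, let B̄† = (B̄^T B̄)^{-1} B̄^T, let t > 0, and let G ∈ ℝ^{j×j} be a symmetric matrix that is positive definite on the subspace {w ∈ ℝ^j : B̄^T w = 0}. Then the matrix J = B̄ B̄† + t(I_j − B̄ B̄†) G is nonsingular. -/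
/-!
Write `P = B̄B̄†` and suppose `Jη = 0`. Since `B̄ᵀP = B̄ᵀ`, applying `B̄ᵀ` gives `B̄ᵀη = 0`, hence
`Pη = 0`, and what is left of `Jη = 0` says `(I − P)Gη = 0`, i.e. `Gη` lies in the column space
of `B̄`. That space is orthogonal to `η`, so `ηᵀGη = 0`, and positive definiteness on
`ker B̄ᵀ` forces `η = 0`.
-/

open Matrix

namespace Matrix

variable {m n K : Type*} [Fintype m] [Fintype n] [DecidableEq n] [Field K]

theorem isUnit_of_forall_mulVec_eq_zero {M : Matrix n n K} (hM : ∀ v, M *ᵥ v = 0 → v = 0) :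
    IsUnit M := by
  rw [isUnit_iff_isUnit_det, isUnit_iff_ne_zero]
  intro hdet
  obtain ⟨v, hv, hMv⟩ := exists_mulVec_eq_zero_iff.mpr hdet
  exact hv (hM v hMv)

/-- `B B†` for the pseudoinverse `B† = (BᵀB)⁻¹Bᵀ`: the orthogonal projection onto the column space
of `B` when `B` has full column rank. -/
noncomputable def colSpaceProj (B : Matrix m n K) : Matrix m m K :=
  B * ((Bᵀ * B)⁻¹ * Bᵀ)

theorem transpose_colSpaceProj (B : Matrix m n K) : (colSpaceProj B)ᵀ = colSpaceProj B := by
  simp only [colSpaceProj, transpose_mul, transpose_transpose, transpose_nonsing_inv,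
    Matrix.mul_assoc]

theorem colSpaceProj_mulVec_of_transpose_mulVec_eq_zero (B : Matrix m n K) {w : m → K}
    (hw : Bᵀ *ᵥ w = 0) : colSpaceProj B *ᵥ w = 0 := by
  simp only [colSpaceProj, ← mulVec_mulVec, hw, mulVec_zero]

theorem transpose_mul_colSpaceProj {B : Matrix m n K} (hB : IsUnit (Bᵀ * B)) :
    Bᵀ * colSpaceProj B = Bᵀ := by
  rw [colSpaceProj, ← Matrix.mul_assoc, ← Matrix.mul_assoc,
    mul_nonsing_inv _ ((isUnit_iff_isUnit_det _).mp hB), Matrix.one_mul]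

theorem dotProduct_mulVec_eq_zero_of_colSpaceProj [DecidableEq m] (B : Matrix m n K)
    (G : Matrix m m K) {η : m → K} (hη : Bᵀ *ᵥ η = 0)
    (hGη : ((1 - colSpaceProj B) * G) *ᵥ η = 0) :
    η ⬝ᵥ (G *ᵥ η) = 0 := by
  have hG : G *ᵥ η = colSpaceProj B *ᵥ (G *ᵥ η) := by
    rwa [← mulVec_mulVec, sub_mulVec, one_mulVec, sub_eq_zero] at hGη
  have hηP : η ᵥ* colSpaceProj B = 0 := by
    rw [← transpose_colSpaceProj, vecMul_transpose,
      colSpaceProj_mulVec_of_transpose_mulVec_eq_zero B hη]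
  rw [hG, dotProduct_mulVec, hηP, zero_dotProduct]

variable [LinearOrder K] [IsStrictOrderedRing K]

theorem isUnit_transpose_mul_self {B : Matrix m n K} (hB : ∀ v, B *ᵥ v = 0 → v = 0) :
    IsUnit (Bᵀ * B) := by
  refine isUnit_of_forall_mulVec_eq_zero fun v hv => hB v (dotProduct_self_eq_zero.mp ?_)
  have : v ⬝ᵥ ((Bᵀ * B) *ᵥ v) = 0 := by rw [hv, dotProduct_zero]
  rwa [← mulVec_mulVec, dotProduct_mulVec, vecMul_transpose] at this

theorem isUnit_colSpaceProj_add_smul [DecidableEq m] {B : Matrix m n K}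
    (hB : ∀ v, B *ᵥ v = 0 → v = 0) {G : Matrix m m K}
    (hG : ∀ w, w ≠ 0 → Bᵀ *ᵥ w = 0 → 0 < w ⬝ᵥ (G *ᵥ w)) {t : K} (ht : t ≠ 0) :
    IsUnit (colSpaceProj B + t • ((1 - colSpaceProj B) * G)) := by
  set P := colSpaceProj B
  refine isUnit_of_forall_mulVec_eq_zero fun η hJη => ?_
  have hBP : Bᵀ * P = Bᵀ := transpose_mul_colSpaceProj (isUnit_transpose_mul_self hB)
  have hBJ : Bᵀ * (P + t • ((1 - P) * G)) = Bᵀ := by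
    rw [Matrix.mul_add, Matrix.mul_smul, ← Matrix.mul_assoc, Matrix.mul_sub, Matrix.mul_one, hBP,
      sub_self, Matrix.zero_mul, smul_zero, add_zero]
  have hBη : Bᵀ *ᵥ η = 0 := by rw [← hBJ, ← mulVec_mulVec, hJη, mulVec_zero]
  have hGη : ((1 - P) * G) *ᵥ η = 0 := by
    rwa [add_mulVec, colSpaceProj_mulVec_of_transpose_mulVec_eq_zero B hBη, zero_add,
      smul_mulVec, smul_eq_zero, or_iff_right ht] at hJη
  by_contra hne
  exact (hG η hne hBη).ne' (dotProduct_mulVec_eq_zero_of_colSpaceProj B G hBη hGη)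

end Matrix

theorem J11_nonsingular_general (j d : ℕ) (t : ℝ) (ht : 0 < t)
    (Bb : Matrix (Fin j) (Fin d) ℝ)
    (hrank : ∀ v : Fin d → ℝ, Bb *ᵥ v = 0 → v = 0)
    (G : Matrix (Fin j) (Fin j) ℝ)
    (hpos : ∀ w : Fin j → ℝ, w ≠ 0 → Bbᵀ *ᵥ w = 0 → 0 < w ⬝ᵥ (G *ᵥ w)) :
    IsUnit (Bb * ((Bbᵀ * Bb)⁻¹ * Bbᵀ) +
      t • (((1 : Matrix (Fin j) (Fin j) ℝ) - Bb * ((Bbᵀ * Bb)⁻¹ * Bbᵀ)) * G)) :=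
  isUnit_colSpaceProj_add_smul hrank hpos ht.ne'

/-- If `B̄ ∈ ℝ^{j×d}` has full column rank (`j ≥ d`), `t > 0`, and the symmetric
matrix `G` is positive definite on `{w : B̄ᵀ w = 0}`, then
`J = B̄B̄† + t(I − B̄B̄†)G` is nonsingular, where `B̄† = (B̄ᵀB̄)⁻¹B̄ᵀ`. -/
theorem J11_nonsingular (j d : ℕ) (hjd : d ≤ j) (t : ℝ) (ht : 0 < t)
    (Bb : Matrix (Fin j) (Fin d) ℝ)
    (hrank : ∀ v : Fin d → ℝ, Bb *ᵥ v = 0 → v = 0)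
    (G : Matrix (Fin j) (Fin j) ℝ) (hGsymm : Gᵀ = G)
    (hpos : ∀ w : Fin j → ℝ, w ≠ 0 → Bbᵀ *ᵥ w = 0 → 0 < w ⬝ᵥ (G *ᵥ w)) :
    IsUnit (Bb * ((Bbᵀ * Bb)⁻¹ * Bbᵀ) +
      t • (((1 : Matrix (Fin j) (Fin j) ℝ) - Bb * ((Bbᵀ * Bb)⁻¹ * Bbᵀ)) * G)) :=
  J11_nonsingular_general j d t ht Bb hrank G hpos
end

section
/- Let G : ℝ^m → ℝ^m be locally Lipschitz near y⁰ and suppose G is strongly semismooth at y⁰ with respect to a compact-valued, upper semicontinuous set-valued map K: for every J ∈ K(y⁰ + d), G(y⁰ + d) − G(y⁰) − J d = O(‖d‖²) as d → 0. If additionally every J ∈ K(y) is invertible with ‖J^{-1}‖ ≤ C uniformly for y near y⁰ and G(y⁰) = 0, then the semismooth Newton iteration y_{k+1} = y_k − J_k^{-1} G(y_k) with J_k ∈ K(y_k) converges quadratically to y⁰ from any starting point sufficiently close to y⁰. -/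
/-!
With `e = y - y⁰` and `G y⁰ = 0`, a Newton step gives `y⁺ - y⁰ = -J⁻¹ (G y - G y⁰ - J e)`, so strong
semismoothness and the uniform bound on `J⁻¹` yield `‖y⁺ - y⁰‖ ≤ C c₁ ‖e‖²`. Once
`‖e‖ ≤ 1 / (2 C c₁)` this at least halves the error, so the iterates never leave that ball and
converge geometrically.
-/

open Filter Topology

theorem norm_sub_inverse_apply_sub_le {𝕜 E F : Type*} [NontriviallyNormedField 𝕜]
    [NormedAddCommGroup E] [NormedSpace 𝕜 E] [NormedAddCommGroup F] [NormedSpace 𝕜 F]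
    {J : E →L[𝕜] F} {Ji : F →L[𝕜] E} (hJi : Ji.comp J = .id 𝕜 E) {C : ℝ} (hC : ‖Ji‖ ≤ C)
    (x y : E) (g : F) : ‖x - Ji g - y‖ ≤ C * ‖g - J (x - y)‖ := by
  have hcancel : Ji (J (x - y)) = x - y := DFunLike.congr_fun hJi (x - y)
  have herror : x - Ji g - y = -Ji (g - J (x - y)) := by
    rw [map_sub, hcancel]
    abel
  rw [herror, norm_neg]
  exact Ji.le_of_opNorm_le hC _

theorem tendsto_zero_of_le_mul_sq {e : ℕ → ℝ} {c δ : ℝ} (hcδ : c * δ ≤ 1 / 2)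
    (he : ∀ k, 0 ≤ e k) (hstep : ∀ k, e k < δ → e (k + 1) ≤ c * e k ^ 2) (h0 : e 0 < δ) :
    (∀ k, e k < δ) ∧ Tendsto e atTop (𝓝 0) := by
  have halve : ∀ k, e k < δ → e (k + 1) ≤ 1 / 2 * e k := by
    intro k hk
    refine (hstep k hk).trans ?_
    rcases le_or_gt 0 c with hc | hc
    · nlinarith [he k, mul_le_mul_of_nonneg_left hk.le hc]
    · nlinarith [he k]
  have hlt : ∀ k, e k < δ := by
    intro k
    induction k with
    | zero => exact h0
    | succ k ih => exact (halve k ih).trans_lt (by linarith [he k])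
  refine ⟨hlt, squeeze_zero he (fun k => le_geom (by norm_num) k fun j _ => halve j (hlt j)) ?_⟩
  simpa using (tendsto_pow_atTop_nhds_zero_of_lt_one (by norm_num : (0 : ℝ) ≤ 1 / 2)
    (by norm_num)).mul_const (e 0)

theorem semismooth_newton_quadratic_general (m : ℕ)
    (G : EuclideanSpace ℝ (Fin m) → EuclideanSpace ℝ (Fin m))
    (y0 : EuclideanSpace ℝ (Fin m))
    (K : EuclideanSpace ℝ (Fin m) →
      Set (EuclideanSpace ℝ (Fin m) →L[ℝ] EuclideanSpace ℝ (Fin m)))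
    (hss : ∃ c₁ > (0 : ℝ), ∃ r₁ > (0 : ℝ), ∀ d : EuclideanSpace ℝ (Fin m), ‖d‖ < r₁ →
      ∀ J ∈ K (y0 + d), ‖G (y0 + d) - G y0 - J d‖ ≤ c₁ * ‖d‖ ^ 2)
    (C : ℝ) (hC : 0 < C)
    (hinv : ∃ r₂ > (0 : ℝ), ∀ y, ‖y - y0‖ < r₂ → ∀ J ∈ K y,
      ∃ Ji : EuclideanSpace ℝ (Fin m) →L[ℝ] EuclideanSpace ℝ (Fin m),
        Ji.comp J = ContinuousLinearMap.id ℝ _ ∧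
        J.comp Ji = ContinuousLinearMap.id ℝ _ ∧ ‖Ji‖ ≤ C)
    (hG0 : G y0 = 0) :
    ∃ δ > (0 : ℝ), ∃ c > (0 : ℝ),
      ∀ (y : ℕ → EuclideanSpace ℝ (Fin m))
        (J Ji : ℕ → (EuclideanSpace ℝ (Fin m) →L[ℝ] EuclideanSpace ℝ (Fin m))),
        (∀ k, J k ∈ K (y k)) →
        (∀ k, (Ji k).comp (J k) = ContinuousLinearMap.id ℝ _ ∧
          (J k).comp (Ji k) = ContinuousLinearMap.id ℝ _) →
        (∀ k, y (k + 1) = y k - Ji k (G (y k))) →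
        ‖y 0 - y0‖ < δ →
        (∀ k, ‖y (k + 1) - y0‖ ≤ c * ‖y k - y0‖ ^ 2) ∧
          Filter.Tendsto y Filter.atTop (nhds y0) := by
  obtain ⟨c₁, hc₁, r₁, hr₁, hss⟩ := hss
  obtain ⟨r₂, hr₂, hinv⟩ := hinv
  set c := C * c₁
  have hc : 0 < c := by positivity
  set δ := min (min r₁ r₂) (1 / (2 * c))
  have hcδ : c * δ ≤ 1 / 2 :=
    (mul_le_mul_of_nonneg_left (min_le_right _ _) hc.le).trans_eq (by field_simp)
  refine ⟨δ, by positivity, c, hc, fun y J Ji hJK hJi hiter hy0 => ?_⟩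
  have hstep : ∀ k, ‖y k - y0‖ < δ → ‖y (k + 1) - y0‖ ≤ c * ‖y k - y0‖ ^ 2 := by
    intro k hk
    have hk₁ : ‖y k - y0‖ < r₁ := hk.trans_le ((min_le_left _ _).trans (min_le_left _ _))
    have hk₂ : ‖y k - y0‖ < r₂ := hk.trans_le ((min_le_left _ _).trans (min_le_right _ _))
    obtain ⟨Ji', -, hJJi', hJi'C⟩ := hinv (y k) hk₂ (J k) (hJK k)
    have hJiC : ‖Ji k‖ ≤ C := left_inv_eq_right_inv (hJi k).1 hJJi' ▸ hJi'C
    have hrem := hss (y k - y0) hk₁ (J k) (by rw [add_sub_cancel]; exact hJK k)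
    rw [add_sub_cancel, hG0, sub_zero] at hrem
    calc ‖y (k + 1) - y0‖ ≤ C * ‖G (y k) - J k (y k - y0)‖ := by
          rw [hiter k]; exact norm_sub_inverse_apply_sub_le (hJi k).1 hJiC _ _ _
      _ ≤ C * (c₁ * ‖y k - y0‖ ^ 2) := by gcongr
      _ = c * ‖y k - y0‖ ^ 2 := by ring
  obtain ⟨hball, htend⟩ := tendsto_zero_of_le_mul_sq (e := fun k => ‖y k - y0‖) hcδ
    (fun _ => norm_nonneg _) hstep hy0
  exact ⟨fun k => hstep k (hball k), tendsto_iff_norm_sub_tendsto_zero.2 htend⟩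

/-- Local quadratic convergence of the semismooth Newton iteration: if `G` is
locally Lipschitz near `y⁰`, strongly semismooth at `y⁰` with respect to a
compact-valued upper semicontinuous map `K`, every `J ∈ K(y)` near `y⁰` is
invertible with uniformly bounded inverse, and `G(y⁰) = 0`, then the iteration
`y_{k+1} = y_k − J_k⁻¹ G(y_k)` (`J_k ∈ K(y_k)`) converges quadratically to `y⁰`
from any starting point sufficiently close to `y⁰`. -/
theorem semismooth_newton_quadratic (m : ℕ)
    (G : EuclideanSpace ℝ (Fin m) → EuclideanSpace ℝ (Fin m))
    (y0 : EuclideanSpace ℝ (Fin m))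
    (K : EuclideanSpace ℝ (Fin m) →
      Set (EuclideanSpace ℝ (Fin m) →L[ℝ] EuclideanSpace ℝ (Fin m)))
    (hKcomp : ∀ y, IsCompact (K y))
    (hKusc : ∀ y : EuclideanSpace ℝ (Fin m), ∀ V : Set (EuclideanSpace ℝ (Fin m) →L[ℝ]
      EuclideanSpace ℝ (Fin m)), IsOpen V → K y ⊆ V →
      ∀ᶠ y' in nhds y, K y' ⊆ V)
    (hlip : ∃ r > (0 : ℝ), ∃ L : NNReal, LipschitzOnWith L G (Metric.ball y0 r))
    (hss : ∃ c₁ > (0 : ℝ), ∃ r₁ > (0 : ℝ), ∀ d : EuclideanSpace ℝ (Fin m), ‖d‖ < r₁ →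
      ∀ J ∈ K (y0 + d), ‖G (y0 + d) - G y0 - J d‖ ≤ c₁ * ‖d‖ ^ 2)
    (C : ℝ) (hC : 0 < C)
    (hinv : ∃ r₂ > (0 : ℝ), ∀ y, ‖y - y0‖ < r₂ → ∀ J ∈ K y,
      ∃ Ji : EuclideanSpace ℝ (Fin m) →L[ℝ] EuclideanSpace ℝ (Fin m),
        Ji.comp J = ContinuousLinearMap.id ℝ _ ∧
        J.comp Ji = ContinuousLinearMap.id ℝ _ ∧ ‖Ji‖ ≤ C)
    (hG0 : G y0 = 0) :
    ∃ δ > (0 : ℝ), ∃ c > (0 : ℝ),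
      ∀ (y : ℕ → EuclideanSpace ℝ (Fin m))
        (J Ji : ℕ → (EuclideanSpace ℝ (Fin m) →L[ℝ] EuclideanSpace ℝ (Fin m))),
        (∀ k, J k ∈ K (y k)) →
        (∀ k, (Ji k).comp (J k) = ContinuousLinearMap.id ℝ _ ∧
          (J k).comp (Ji k) = ContinuousLinearMap.id ℝ _) →
        (∀ k, y (k + 1) = y k - Ji k (G (y k))) →
        ‖y 0 - y0‖ < δ →
        (∀ k, ‖y (k + 1) - y0‖ ≤ c * ‖y k - y0‖ ^ 2) ∧
          Filter.Tendsto y Filter.atTop (nhds y0) :=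
  semismooth_newton_quadratic_general m G y0 K hss C hC hinv hG0
end

section
/- Let {x_k} be a sequence in a metric space with dist(x_{k+1}, x_k) → 0, let x* be an accumulation point of {x_k}, and let N, S be sets with x* ∈ N, dist(S, N) > 0, and such that whenever x_k ∈ N and dist(x_{k+1}, x_k) < dist(S, N), then x_{k+1} ∈ N ∪ (interior region enclosed by S containing N); assume further that any point of the enclosed region with F-value below the threshold defining N lies in N and that F(x_{k+1}) ≤ F(x_k). If x_J ∈ N for some J large enough that dist(x_{k+1}, x_k) < dist(S, N) for all k ≥ J, then x_k ∈ N for all k ≥ J. -/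
theorem capture_argument_general {X : Type*} [MetricSpace X]
    (F : X → ℝ) (xstar : X) (δ c ε : ℝ)
    (x : ℕ → X)
    (N : Set X)
    (hN : N = Metric.closedBall xstar δ ∩ {z | F z < c})
    (hstep : ∀ k, x k ∈ N → dist (x (k + 1)) (x k) < ε →
      x (k + 1) ∈ Metric.closedBall xstar δ)
    (hdesc : ∀ k, F (x (k + 1)) ≤ F (x k))
    (J : ℕ)
    (hsmall : ∀ k, J ≤ k → dist (x (k + 1)) (x k) < ε)
    (hJ : x J ∈ N) :
    ∀ k, J ≤ k → x k ∈ N := by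
  subst hN
  intro k hk
  induction k, hk using Nat.le_induction with
  | base => exact hJ
  | succ n hn hxn => exact ⟨hstep n hxn (hsmall n hn), (hdesc n).trans_lt hxn.2⟩

/-- Abstract capture argument: a descent sequence whose steps beyond index `J`
are smaller than the separation `ε` between the sphere `S` and the sublevel
neighborhood `N = B̄(x*,δ) ∩ {F < c}`, and which cannot jump across `S`, stays
in `N` forever once it enters at index `J`. -/
theorem capture_argument {X : Type*} [MetricSpace X]
    (F : X → ℝ) (xstar : X) (δ c ε : ℝ) (hε : 0 < ε)
    (x : ℕ → X)
    (N : Set X)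
    (hN : N = Metric.closedBall xstar δ ∩ {z | F z < c})
    (hsep : ∀ a ∈ Metric.sphere xstar δ, ∀ b ∈ N, ε ≤ dist a b)
    (hstep : ∀ k, x k ∈ N → dist (x (k + 1)) (x k) < ε →
      x (k + 1) ∈ Metric.closedBall xstar δ)
    (hdesc : ∀ k, F (x (k + 1)) ≤ F (x k))
    (J : ℕ)
    (hsmall : ∀ k, J ≤ k → dist (x (k + 1)) (x k) < ε)
    (hJ : x J ∈ N) :
    ∀ k, J ≤ k → x k ∈ N :=
  capture_argument_general F xstar δ c ε x N hN hstep hdesc J hsmall hJ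
end
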